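/- Let κ be a cardinal, and for each α < κ let (G_{α,k})_{k∈ℕ} be an inverse system of abelian groups with maps p_{α,j,k} : G_{α,j} → G_{α,k} for j ≥ k. For x ∈ ℕ^κ set G_x = ⊕_{α<κ} G_{α,x(α)}, with maps p_{y,x} = ⊕_α p_{α,y(α),x(α)} for x ≤ y pointwise. Then the inverse limit of the system (G_x)_{x∈ℕ^κ} over the directed poset ℕ^κ is isomorphic to the direct sum ⊕_{α<κ} lim_k G_{α,k}. -/

import Mathlib

/-- The inverse limit of an inverse system over a preorder `P`, realized as the
subgroup of the product consisting of compatible threads. -/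
def invLimit {P : Type*} [Preorder P] {G : P → Type*} [∀ x, AddCommGroup (G x)]
    (p : ∀ ⦃x y : P⦄, x ≤ y → G y →+ G x) : AddSubgroup (∀ x, G x) where
  carrier := {f | ∀ ⦃x y : P⦄ (h : x ≤ y), p h (f y) = f x}
  add_mem' := by intro a b ha hb x y h; simp [ha h, hb h]
  zero_mem' := by intro x y h; simp
  neg_mem' := by intro a ha x y h; simp [ha h]

/-! A thread `f` of the system `x ↦ ⊕_α G_{α,x(α)}` has an `α`-coordinate `f x α` that depends
only on `x α`, so it defines a thread of `G_α`. These threads have finite support: if the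
`α`-thread is nonzero, pick `x α` where it is nonzero; then `α` lies in the support of `f x`. -/

namespace invLimit

variable {ι I : Type*} [Preorder I] {G : ι → I → Type*} [∀ α k, AddCommGroup (G α k)]
  (p : ∀ α ⦃k j : I⦄, k ≤ j → G α j →+ G α k)

def dfinsuppSystem ⦃x y : ι → I⦄ (h : x ≤ y) : (Π₀ α, G α (y α)) →+ Π₀ α, G α (x α) :=
  DFinsupp.mapRange.addMonoidHom fun α => p α (h α)

variable {p}

theorem val_apply_eq_val_const_apply [IsDirectedOrder I] (f : invLimit (dfinsuppSystem p))
    (x : ι → I) (α : ι) : f.1 x α = f.1 (fun _ => x α) α := by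
  choose z hxz hz using fun β => exists_ge_ge (x β) (x α)
  have h₁ := DFunLike.congr_fun (f.2 (show x ≤ z from hxz)) α
  have h₂ := DFunLike.congr_fun (f.2 (show (fun _ => x α) ≤ z from hz)) α
  simp only [dfinsuppSystem, DFinsupp.mapRange.addMonoidHom_apply,
    DFinsupp.mapRange_apply] at h₁ h₂
  rw [← h₁, ← h₂]

def component (f : invLimit (dfinsuppSystem p)) (α : ι) : invLimit (p α) :=
  ⟨fun k => f.1 (fun _ => k) α, fun k j h =>
    by simpa [dfinsuppSystem] using DFunLike.congr_fun (f.2 fun _ : ι => h) α⟩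

theorem exists_component_eq_zero_of_apply_eq_zero [Nonempty I] [IsDirectedOrder I]
    (f : invLimit (dfinsuppSystem p)) :
    ∃ x : ι → I, ∀ α, f.1 x α = 0 → component f α = 0 := by
  have hwit : ∀ α, ∃ k, component f α ≠ 0 → f.1 (fun _ => k) α ≠ 0 := by
    intro α
    by_cases hα : component f α = 0
    · exact ⟨Classical.arbitrary I, fun h => absurd hα h⟩
    · obtain ⟨k, hk⟩ : ∃ k, (component f α).1 k ≠ 0 := by
        by_contra! h
        exact hα (Subtype.ext (funext h))
      exact ⟨k, fun _ => hk⟩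
  choose x hx using hwit
  refine ⟨x, fun α h0 => ?_⟩
  by_contra hα
  exact hx α hα (by rwa [← val_apply_eq_val_const_apply])

def ofDFinsupp (g : Π₀ α, invLimit (p α)) : invLimit (dfinsuppSystem p) :=
  ⟨fun x => g.mapRange (fun α s => s.1 (x α)) fun _ => rfl, fun x y h => by
    ext α
    simpa [dfinsuppSystem] using (g α).2 (h α)⟩

@[simp]
theorem ofDFinsupp_apply (g : Π₀ α, invLimit (p α)) (x : ι → I) (α : ι) :
    (ofDFinsupp g).1 x α = (g α).1 (x α) :=
  rfl

variable [Nonempty I] [IsDirectedOrder I]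

noncomputable def toDFinsupp (f : invLimit (dfinsuppSystem p)) : Π₀ α, invLimit (p α) :=
  let x := (exists_component_eq_zero_of_apply_eq_zero f).choose
  ⟨component f, (f.1 x).support'.map fun s =>
    ⟨s.1, fun α => (s.2 α).imp id
      ((exists_component_eq_zero_of_apply_eq_zero f).choose_spec α)⟩⟩

@[simp]
theorem toDFinsupp_apply_val (f : invLimit (dfinsuppSystem p)) (α : ι) (k : I) :
    (toDFinsupp f α).1 k = f.1 (fun _ => k) α :=
  rfl

noncomputable def dfinsuppEquiv :
    invLimit (dfinsuppSystem p) ≃+ Π₀ α, invLimit (p α) where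
  toFun := toDFinsupp
  invFun := ofDFinsupp
  left_inv f := by
    ext x α
    simpa using (val_apply_eq_val_const_apply f x α).symm
  right_inv g := by
    ext α k
    simp
  map_add' f g := by
    ext α k
    simp

end invLimit

theorem stmt_10_general (ι : Type) (G : ι → ℕ → Type) [∀ α k, AddCommGroup (G α k)]
    (p : ∀ (α : ι) ⦃k j : ℕ⦄, k ≤ j → G α j →+ G α k) :
    Nonempty
      ((invLimit (G := fun x : ι → ℕ => Π₀ α, G α (x α))
          (fun x y h => DFinsupp.mapRange.addMonoidHom (fun α => p α (h α)))) ≃+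
        (Π₀ α : ι, (invLimit (G := G α) (fun _ _ h => p α h)))) :=
  ⟨invLimit.dfinsuppEquiv⟩

/-- For `Ω_κ`-type data: the inverse limit over the directed poset `ℕ^κ` of the system
`G_x = ⊕_{α<κ} G_{α,x(α)}` with maps `p_{y,x} = ⊕_α p_{α,y(α),x(α)}` is isomorphic to
the direct sum `⊕_{α<κ} lim_k G_{α,k}`. -/
theorem stmt_10 (ι : Type) (G : ι → ℕ → Type) [∀ α k, AddCommGroup (G α k)]
    (p : ∀ (α : ι) ⦃k j : ℕ⦄, k ≤ j → G α j →+ G α k)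
    (hrefl : ∀ (α : ι) (k : ℕ), p α (le_refl k) = AddMonoidHom.id (G α k))
    (hcomp : ∀ (α : ι) ⦃k j l : ℕ⦄ (h₁ : k ≤ j) (h₂ : j ≤ l),
      (p α h₁).comp (p α h₂) = p α (h₁.trans h₂)) :
    Nonempty
      ((invLimit (G := fun x : ι → ℕ => Π₀ α, G α (x α))
          (fun x y h => DFinsupp.mapRange.addMonoidHom (fun α => p α (h α)))) ≃+
        (Π₀ α : ι, (invLimit (G := G α) (fun _ _ h => p α h)))) :=
  stmt_10_general ι G p
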